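/- arXiv:2005.09221 — 3 statements merged into one kernel-verified Lean document; each statement's English description precedes it below -/
import Mathlib

section
/- (Simon inequality, case p ≥ 2.) For all p ≥ 2 and all vectors ζ, ξ ∈ ℝ^N: |ζ − ξ|^p ≤ 2^p · (|ζ|^{p-2}ζ − |ξ|^{p-2}ξ) · (ζ − ξ), where · denotes the Euclidean inner product. -/
open Real

theorem simon_inequality_p_ge_two (N : ℕ) (p : ℝ) (hp : 2 ≤ p)
    (ζ ξ : EuclideanSpace ℝ (Fin N)) :
    ‖ζ - ξ‖ ^ p ≤
      2 ^ p * (inner (𝕜 := ℝ) ((‖ζ‖ ^ (p - 2)) • ζ - (‖ξ‖ ^ (p - 2)) • ξ) (ζ - ξ)) := by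
  have hq : 0 ≤ p - 2 := by linarith
  set a := ‖ζ‖ with ha_def
  set b := ‖ξ‖ with hb_def
  set d := ‖ζ - ξ‖ with hd_def
  have ha : 0 ≤ a := norm_nonneg _
  have hb : 0 ≤ b := norm_nonneg _
  have hd : 0 ≤ d := norm_nonneg _
  set t : ℝ := inner (𝕜 := ℝ) ζ ξ with ht_def
  have hI : inner (𝕜 := ℝ) ((a ^ (p - 2)) • ζ - (b ^ (p - 2)) • ξ) (ζ - ξ)
      = a ^ (p - 2) * a ^ 2 + b ^ (p - 2) * b ^ 2 - (a ^ (p - 2) + b ^ (p - 2)) * t := by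
    have hcomm : (inner (𝕜 := ℝ) ξ ζ : ℝ) = t := real_inner_comm ζ ξ
    simp only [inner_sub_left, inner_sub_right, real_inner_smul_left,
      real_inner_self_eq_norm_sq, hcomm, ← ht_def, ← ha_def, ← hb_def]
    ring
  have hd2 : d ^ 2 = a ^ 2 + b ^ 2 - 2 * t := by
    rw [hd_def, @norm_sub_sq_real]; ring
  have hmono : 0 ≤ (a ^ (p - 2) - b ^ (p - 2)) * (a ^ 2 - b ^ 2) := by
    rcases le_total a b with h | h
    · have h1 : a ^ (p - 2) ≤ b ^ (p - 2) := Real.rpow_le_rpow ha h hq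
      have h2 : a ^ 2 ≤ b ^ 2 := by nlinarith
      nlinarith [mul_nonneg (sub_nonneg.2 h1) (sub_nonneg.2 h2)]
    · have h1 : b ^ (p - 2) ≤ a ^ (p - 2) := Real.rpow_le_rpow hb h hq
      have h2 : b ^ 2 ≤ a ^ 2 := by nlinarith
      nlinarith [mul_nonneg (sub_nonneg.2 h1) (sub_nonneg.2 h2)]
  have hpa : 0 ≤ a ^ (p - 2) := Real.rpow_nonneg ha _
  have hpb : 0 ≤ b ^ (p - 2) := Real.rpow_nonneg hb _
  have key : (a ^ (p - 2) + b ^ (p - 2)) / 2 * d ^ 2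
      ≤ inner (𝕜 := ℝ) ((a ^ (p - 2)) • ζ - (b ^ (p - 2)) • ξ) (ζ - ξ) := by
    rw [hI, hd2]; nlinarith
  have hinner : 0 ≤ inner (𝕜 := ℝ) ((a ^ (p - 2)) • ζ - (b ^ (p - 2)) • ξ) (ζ - ξ) := by
    refine le_trans ?_ key
    positivity
  rcases eq_or_lt_of_le hd with hd0 | hd0
  · have hdz : d = 0 := hd0.symm
    have h0 : d ^ p = 0 := by rw [hdz, Real.zero_rpow (by linarith : p ≠ 0)]
    rw [h0]
    exact mul_nonneg (Real.rpow_nonneg (by norm_num) _) hinner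
  · -- d > 0
    have hdp : d ^ p = d ^ (p - 2) * d ^ 2 := by
      rw [show p = (p - 2) + 2 by ring, Real.rpow_add hd0]
      norm_num [Real.rpow_two]
    have hA : d ^ (p - 2) ≤ 2 ^ (p - 2) * (a ^ (p - 2) + b ^ (p - 2)) := by
      have h1 : d ^ (p - 2) ≤ (a + b) ^ (p - 2) :=
        Real.rpow_le_rpow hd (norm_sub_le _ _) hq
      have h2 : (a + b) ^ (p - 2) ≤ (2 * max a b) ^ (p - 2) := by
        apply Real.rpow_le_rpow (by linarith) _ hq
        rcases le_total a b with h | h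
        · simp [max_eq_right h]; linarith
        · simp [max_eq_left h]; linarith
      have h3 : (2 * max a b) ^ (p - 2) = 2 ^ (p - 2) * (max a b) ^ (p - 2) :=
        Real.mul_rpow (by norm_num) (le_max_of_le_left ha)
      have h4 : (max a b) ^ (p - 2) ≤ a ^ (p - 2) + b ^ (p - 2) := by
        rcases le_total a b with h | h
        · rw [max_eq_right h]; linarith
        · rw [max_eq_left h]; linarith
      have h2pos : (0:ℝ) ≤ 2 ^ (p - 2) := Real.rpow_nonneg (by norm_num) _
      calc d ^ (p - 2) ≤ (a + b) ^ (p - 2) := h1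
        _ ≤ (2 * max a b) ^ (p - 2) := h2
        _ = 2 ^ (p - 2) * (max a b) ^ (p - 2) := h3
        _ ≤ 2 ^ (p - 2) * (a ^ (p - 2) + b ^ (p - 2)) := by nlinarith
    have hd2pos : 0 ≤ d ^ 2 := sq_nonneg d
    have step : d ^ p ≤ 2 ^ (p - 1) *
        ((a ^ (p - 2) + b ^ (p - 2)) / 2 * d ^ 2) := by
      rw [hdp]
      have h21 : (2:ℝ) ^ (p - 1) = 2 ^ (p - 2) * 2 := by
        rw [show p - 1 = (p - 2) + 1 by ring, Real.rpow_add (by norm_num)]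
        norm_num
      rw [h21]
      have := mul_le_mul_of_nonneg_right hA hd2pos
      linarith [this]
    have step2 : 2 ^ (p - 1) * ((a ^ (p - 2) + b ^ (p - 2)) / 2 * d ^ 2)
        ≤ 2 ^ (p - 1) * (inner (𝕜 := ℝ) ((a ^ (p - 2)) • ζ - (b ^ (p - 2)) • ξ) (ζ - ξ)) := by
      apply mul_le_mul_of_nonneg_left key (Real.rpow_nonneg (by norm_num) _)
    have step3 : (2:ℝ) ^ (p - 1) ≤ 2 ^ p :=
      Real.rpow_le_rpow_of_exponent_le (by norm_num) (by linarith)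
    calc d ^ p ≤ _ := step
      _ ≤ _ := step2
      _ ≤ 2 ^ p * (inner (𝕜 := ℝ) ((a ^ (p - 2)) • ζ - (b ^ (p - 2)) • ξ) (ζ - ξ)) :=
        mul_le_mul_of_nonneg_right step3 hinner
end

section
/- (Simon inequality, case 1 < p < 2.) For all 1 < p < 2 and all vectors ζ, ξ ∈ ℝ^N with (ζ,ξ) ≠ (0,0): |ζ − ξ|^p ≤ (1/(p−1)) · [ (|ζ|^{p-2}ζ − |ξ|^{p-2}ξ) · (ζ − ξ) ]^{p/2} · ( |ζ|^p + |ξ|^p )^{(2−p)/2}. -/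
open Real

-- a^(p-2) * a = a^(p-1), valid also at a = 0 with rpow conventions
lemma rp_mul_one {p a : ℝ} (hp1 : 1 < p) (hp2 : p < 2) (ha : 0 ≤ a) :
    a ^ (p-2) * a = a ^ (p-1) := by
  rcases ha.eq_or_lt with h | h
  · subst h
    rw [Real.zero_rpow (by linarith), Real.zero_rpow (by linarith)]; ring
  · rw [show p - 1 = (p-2) + 1 by ring, Real.rpow_add h, Real.rpow_one]

lemma rp_mul_two {p a : ℝ} (hp1 : 1 < p) (hp2 : p < 2) (ha : 0 ≤ a) :
    a ^ (p-2) * a ^ 2 = a ^ p := by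
  rcases ha.eq_or_lt with h | h
  · subst h
    rw [Real.zero_rpow (by linarith), Real.zero_rpow (by linarith)]; ring
  · rw [show (a:ℝ)^2 = a ^ (2:ℝ) by rw [Real.rpow_two],
      ← Real.rpow_add h]; ring_nf

-- S ≤ a^(p-2) when 0 < a, where S = (a^2+b^2)^((p-2)/2)
lemma S_le {p a b : ℝ} (hp2 : p < 2) (ha : 0 < a) (hb : 0 ≤ b) :
    (a^2 + b^2) ^ ((p-2)/2) ≤ a ^ (p-2) := by
  have h1 : (a^2 : ℝ) ≤ a^2 + b^2 := by nlinarith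
  have h2 : ((a^2 : ℝ)) ^ ((p-2)/2) = a ^ (p-2) := by
    rw [show (a:ℝ)^2 = a ^ (2:ℝ) by rw [Real.rpow_two], ← Real.rpow_mul ha.le]
    norm_num
    ring_nf
  calc (a^2 + b^2) ^ ((p-2)/2) ≤ (a^2) ^ ((p-2)/2) :=
        Real.rpow_le_rpow_of_nonpos (by positivity) h1 (by linarith)
    _ = a ^ (p-2) := h2

-- a * S ≤ a^(p-1)
lemma aS_le {p a b : ℝ} (hp1 : 1 < p) (hp2 : p < 2) (ha : 0 ≤ a) (hb : 0 ≤ b) :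
    a * (a^2 + b^2) ^ ((p-2)/2) ≤ a ^ (p-1) := by
  rcases ha.eq_or_lt with h | h
  · subst h
    rw [Real.zero_rpow (by linarith)]
    simp
  · calc a * (a^2 + b^2) ^ ((p-2)/2) ≤ a * a ^ (p-2) :=
        mul_le_mul_of_nonneg_left (S_le hp2 h hb) h.le
      _ = a ^ (p-1) := by rw [mul_comm]; exact rp_mul_one hp1 hp2 h.le

-- concavity step: for 0 ≤ b ≤ a, (p-1)*(a-b)*a^(p-2) ≤ a^(p-1) - b^(p-1)
lemma concav_step {p a b : ℝ} (hp1 : 1 < p) (hp2 : p < 2) (hb : 0 ≤ b) (hba : b ≤ a) :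
    (p-1) * (a-b) * a ^ (p-2) ≤ a ^ (p-1) - b ^ (p-1) := by
  have ha : 0 ≤ a := hb.trans hba
  rcases ha.eq_or_lt with h | h
  · have : b = 0 := le_antisymm (h ▸ hba) hb
    subst this; rw [← h]
    rw [Real.zero_rpow (by linarith), Real.zero_rpow (by linarith)]
    ring_nf
    simp
  · -- a > 0; Bernoulli with u = b/a
    have hu0 : 0 ≤ b / a := div_nonneg hb h.le
    have hu1 : b / a ≤ 1 := (div_le_one h).mpr hba
    have hbern : (b/a) ^ (p-1) ≤ 1 + (p-1) * (b/a - 1) := by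
      have := rpow_one_add_le_one_add_mul_self
        (s := b/a - 1) (by linarith) (p := p-1) (by linarith) (by linarith)
      simpa using this
    have hA : (0:ℝ) < a ^ (p-1) := Real.rpow_pos_of_pos h _
    have key : b ^ (p-1) ≤ a ^ (p-1) + (p-1) * (b/a - 1) * a ^ (p-1) := by
      have hdiv : (b/a) ^ (p-1) = b ^ (p-1) / a ^ (p-1) := Real.div_rpow hb h.le _
      rw [hdiv] at hbern
      have := mul_le_mul_of_nonneg_right hbern hA.le
      rw [div_mul_cancel₀ _ hA.ne'] at this
      linarith [this]
    have haa : (p-1) * (b/a - 1) * a ^ (p-1) = (p-1) * (b - a) * a ^ (p-2) := by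
      have h1 : a ^ (p-1) = a ^ (p-2) * a := (rp_mul_one hp1 hp2 h.le).symm
      rw [h1]
      field_simp
    rw [haa] at key
    nlinarith [key]

-- E1 with b ≤ a
lemma endpoint1_aux {p a b : ℝ} (hp1 : 1 < p) (hp2 : p < 2) (hb : 0 ≤ b) (hba : b ≤ a) :
    (p-1) * (a^2 + b^2 - 2*(a*b)) * (a^2+b^2) ^ ((p-2)/2)
      ≤ a^p + b^p - (a ^ (p-2) + b ^ (p-2)) * (a*b) := by
  have ha : 0 ≤ a := hb.trans hba
  have hid : a^p + b^p - (a ^ (p-2) + b ^ (p-2)) * (a*b)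
      = (a - b) * (a ^ (p-1) - b ^ (p-1)) := by
    have h1 := rp_mul_one hp1 hp2 ha
    have h2 := rp_mul_one hp1 hp2 hb
    have h3 := rp_mul_two hp1 hp2 ha
    have h4 := rp_mul_two hp1 hp2 hb
    nlinarith [h1, h2, h3, h4]
  rw [hid]
  rcases ha.eq_or_lt with h | h
  · have hb0 : b = 0 := le_antisymm (h ▸ hba) hb
    subst hb0; rw [← h]; norm_num
  · have hS : (a^2+b^2) ^ ((p-2)/2) ≤ a ^ (p-2) := S_le hp2 h hb
    have hc := concav_step hp1 hp2 hb hba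
    have h5 : (p-1) * (a-b) * (a^2+b^2) ^ ((p-2)/2) ≤ a ^ (p-1) - b ^ (p-1) := by
      calc (p-1) * (a-b) * (a^2+b^2) ^ ((p-2)/2) ≤ (p-1) * (a-b) * a ^ (p-2) :=
            mul_le_mul_of_nonneg_left hS (by nlinarith)
        _ ≤ a ^ (p-1) - b ^ (p-1) := hc
    nlinarith [h5, sub_nonneg.mpr hba]

-- E1: endpoint t = a*b
lemma endpoint1 {p a b : ℝ} (hp1 : 1 < p) (hp2 : p < 2) (ha : 0 ≤ a) (hb : 0 ≤ b) :
    (p-1) * (a^2 + b^2 - 2*(a*b)) * (a^2+b^2) ^ ((p-2)/2)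
      ≤ a^p + b^p - (a ^ (p-2) + b ^ (p-2)) * (a*b) := by
  rcases le_total b a with hba | hab
  · exact endpoint1_aux hp1 hp2 hb hba
  · have := endpoint1_aux hp1 hp2 ha hab
    have e : b^2 + a^2 = a^2 + b^2 := by ring
    rw [e] at this
    linarith [this]

-- E2: endpoint t = -(a*b)
lemma endpoint2 {p a b : ℝ} (hp1 : 1 < p) (hp2 : p < 2) (ha : 0 ≤ a) (hb : 0 ≤ b) :
    (p-1) * (a^2 + b^2 + 2*(a*b)) * (a^2+b^2) ^ ((p-2)/2)
      ≤ a^p + b^p + (a ^ (p-2) + b ^ (p-2)) * (a*b) := by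
  have hid : a^p + b^p + (a ^ (p-2) + b ^ (p-2)) * (a*b)
      = (a + b) * (a ^ (p-1) + b ^ (p-1)) := by
    have h1 := rp_mul_one hp1 hp2 ha
    have h2 := rp_mul_one hp1 hp2 hb
    have h3 := rp_mul_two hp1 hp2 ha
    have h4 := rp_mul_two hp1 hp2 hb
    nlinarith [h1, h2, h3, h4]
  rw [hid]
  have hA := aS_le hp1 hp2 ha hb
  have hB := aS_le (a := b) (b := a) hp1 hp2 hb ha
  have e : b^2 + a^2 = a^2 + b^2 := by ring
  rw [e] at hB
  have hSpos : (0:ℝ) ≤ (a^2+b^2) ^ ((p-2)/2) := Real.rpow_nonneg (by positivity) _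
  have hsum : (a+b) * (a^2+b^2) ^ ((p-2)/2) ≤ a ^ (p-1) + b ^ (p-1) := by
    nlinarith [hA, hB]
  have h2 : (a+b) * ((a+b) * (a^2+b^2) ^ ((p-2)/2)) ≤ (a+b) * (a ^ (p-1) + b ^ (p-1)) :=
    mul_le_mul_of_nonneg_left hsum (by linarith)
  have h3 : (0:ℝ) ≤ (a+b)^2 * (a^2+b^2) ^ ((p-2)/2) := by positivity
  nlinarith [h2, h3, mul_nonneg (by linarith : (0:ℝ) ≤ 2-p) h3]

-- Key scalar inequality
lemma simon_key {p a b t : ℝ} (hp1 : 1 < p) (hp2 : p < 2) (ha : 0 ≤ a) (hb : 0 ≤ b)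
    (ht : |t| ≤ a * b) :
    (p-1) * (a^2 + b^2 - 2*t) * (a^2+b^2) ^ ((p-2)/2)
      ≤ a^p + b^p - (a ^ (p-2) + b ^ (p-2)) * t := by
  have htu : t ≤ a*b := (abs_le.mp ht).2
  have htl : -(a*b) ≤ t := (abs_le.mp ht).1
  have hE1 := endpoint1 hp1 hp2 ha hb
  have hE2 := endpoint2 hp1 hp2 ha hb
  rcases eq_or_lt_of_le (mul_nonneg ha hb) with h | h
  · have ht0 : t = 0 := by
      have : |t| ≤ 0 := by rw [← h] at ht; exact ht
      simpa using le_antisymm this (abs_nonneg t)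
    subst ht0
    rw [← h] at hE1
    simpa using (by linarith [hE1] :
      (p-1) * (a^2 + b^2 - 2*0) * (a^2+b^2) ^ ((p-2)/2)
        ≤ a^p + b^p - (a ^ (p-2) + b ^ (p-2)) * 0)
  · -- affine interpolation
    set S := (a^2+b^2) ^ ((p-2)/2) with hS
    set L : ℝ := a^p + b^p - (a ^ (p-2) + b ^ (p-2)) * t
        - (p-1) * (a^2 + b^2 - 2*t) * S with hL
    have hnum : L * (2*(a*b)) =
        (a*b - t) * (a^p + b^p + (a ^ (p-2) + b ^ (p-2)) * (a*b)
            - (p-1) * (a^2 + b^2 + 2*(a*b)) * S)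
        + (a*b + t) * (a^p + b^p - (a ^ (p-2) + b ^ (p-2)) * (a*b)
            - (p-1) * (a^2 + b^2 - 2*(a*b)) * S) := by
      ring
    have h1 : 0 ≤ (a*b - t) * (a^p + b^p + (a ^ (p-2) + b ^ (p-2)) * (a*b)
            - (p-1) * (a^2 + b^2 + 2*(a*b)) * S) :=
      mul_nonneg (by linarith) (by linarith)
    have h2 : 0 ≤ (a*b + t) * (a^p + b^p - (a ^ (p-2) + b ^ (p-2)) * (a*b)
            - (p-1) * (a^2 + b^2 - 2*(a*b)) * S) :=
      mul_nonneg (by linarith) (by linarith)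
    have hL0 : 0 ≤ L := by
      have hpos : (0:ℝ) < 2*(a*b) := by linarith
      have : 0 * (2*(a*b)) ≤ L * (2*(a*b)) := by rw [hnum]; linarith
      exact le_of_mul_le_mul_right this hpos
    linarith [hL0]

-- subadditivity: (x+y)^q ≤ x^q + y^q for 0 < q ≤ 1
lemma rpow_subadd {x y q : ℝ} (hx : 0 ≤ x) (hy : 0 ≤ y) (hq0 : 0 < q) (hq1 : q ≤ 1) :
    (x + y) ^ q ≤ x ^ q + y ^ q := by
  rcases eq_or_lt_of_le (add_nonneg hx hy) with h | h
  · rw [← h, Real.zero_rpow hq0.ne']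
    positivity
  · have hx1 : x * (x+y) ^ (q-1) ≤ x ^ q := by
      rcases hx.eq_or_lt with h0 | h0
      · rw [← h0, Real.zero_rpow hq0.ne']; simp
      · have : (x+y) ^ (q-1) ≤ x ^ (q-1) :=
          Real.rpow_le_rpow_of_nonpos h0 (by linarith) (by linarith)
        calc x * (x+y) ^ (q-1) ≤ x * x ^ (q-1) := mul_le_mul_of_nonneg_left this hx
          _ = x ^ q := by
              have e := Real.rpow_add h0 1 (q-1)
              rw [Real.rpow_one] at e
              rw [← e, show 1+(q-1) = q by ring]
    have hy1 : y * (x+y) ^ (q-1) ≤ y ^ q := by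
      rcases hy.eq_or_lt with h0 | h0
      · rw [← h0, Real.zero_rpow hq0.ne']; simp
      · have : (x+y) ^ (q-1) ≤ y ^ (q-1) :=
          Real.rpow_le_rpow_of_nonpos h0 (by linarith) (by linarith)
        calc y * (x+y) ^ (q-1) ≤ y * y ^ (q-1) := mul_le_mul_of_nonneg_left this hy
          _ = y ^ q := by
              have e := Real.rpow_add h0 1 (q-1)
              rw [Real.rpow_one] at e
              rw [← e, show 1+(q-1) = q by ring]
    have hsum : (x+y) * (x+y) ^ (q-1) = (x+y) ^ q := by
      have e := Real.rpow_add h 1 (q-1)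
      rw [Real.rpow_one] at e
      rw [← e, show 1+(q-1) = q by ring]
    nlinarith [hx1, hy1, hsum]

theorem simon_inequality_p_lt_two (N : ℕ) (p : ℝ) (hp1 : 1 < p) (hp2 : p < 2)
    (ζ ξ : EuclideanSpace ℝ (Fin N)) (hne : ¬(ζ = 0 ∧ ξ = 0)) :
    ‖ζ - ξ‖ ^ p ≤
      (1 / (p - 1)) *
        (inner (𝕜 := ℝ) ((‖ζ‖ ^ (p - 2)) • ζ - (‖ξ‖ ^ (p - 2)) • ξ) (ζ - ξ)) ^ (p / 2) *
        (‖ζ‖ ^ p + ‖ξ‖ ^ p) ^ ((2 - p) / 2) := by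
  set a : ℝ := ‖ζ‖ with ha_def
  set b : ℝ := ‖ξ‖ with hb_def
  have ha : (0:ℝ) ≤ a := norm_nonneg _
  have hb : (0:ℝ) ≤ b := norm_nonneg _
  set t : ℝ := inner (𝕜 := ℝ) ζ ξ with ht_def
  have habs : |t| ≤ a * b := abs_real_inner_le_norm ζ ξ
  have hs2 : (0:ℝ) < a^2 + b^2 := by
    push_neg at hne
    rcases eq_or_ne ζ 0 with h0 | h0
    · have hb0 : b ≠ 0 := by
        simpa [hb_def] using norm_ne_zero_iff.mpr (hne h0)
      positivity
    · have ha0 : a ≠ 0 := by simpa [ha_def] using norm_ne_zero_iff.mpr h0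
      positivity
  set S : ℝ := (a^2 + b^2) ^ ((p-2)/2) with hS_def
  have hSpos : (0:ℝ) < S := Real.rpow_pos_of_pos hs2 _
  set I : ℝ := inner (𝕜 := ℝ) ((a ^ (p - 2)) • ζ - (b ^ (p - 2)) • ξ) (ζ - ξ) with hI_def
  have hI : I = a ^ p + b ^ p - (a ^ (p-2) + b ^ (p-2)) * t := by
    rw [hI_def, ht_def, ha_def, hb_def]
    simp only [inner_sub_left, inner_sub_right, real_inner_smul_left,
      real_inner_self_eq_norm_sq, real_inner_comm ξ ζ]
    rw [← rp_mul_two hp1 hp2 (norm_nonneg ζ), ← rp_mul_two hp1 hp2 (norm_nonneg ξ)]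
    ring
  have hd2 : ‖ζ - ξ‖ ^ 2 = a^2 + b^2 - 2*t := by
    rw [norm_sub_sq_real]; ring
  have key : (p-1) * (‖ζ - ξ‖^2) * S ≤ I := by
    rw [hI, hd2]
    exact simon_key hp1 hp2 ha hb habs
  have hI0 : (0:ℝ) ≤ I := by
    refine le_trans ?_ key
    exact mul_nonneg (mul_nonneg (by linarith) (by positivity)) hSpos.le
  -- d2 ≤ I / ((p-1)*S)
  have hpS : (0:ℝ) < (p-1) * S := mul_pos (by linarith) hSpos
  have hd2le : ‖ζ - ξ‖ ^ 2 ≤ I / ((p-1) * S) := by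
    rw [le_div_iff₀ hpS]
    nlinarith [key]
  -- d^p = (d^2)^(p/2)
  have hdp : ‖ζ - ξ‖ ^ p = (‖ζ - ξ‖ ^ 2 : ℝ) ^ (p/2) := by
    rw [← Real.rpow_two, ← Real.rpow_mul (norm_nonneg _), show (2:ℝ)*(p/2) = p by ring]
  have step1 : (‖ζ - ξ‖ ^ 2 : ℝ) ^ (p/2) ≤ (I / ((p-1) * S)) ^ (p/2) :=
    Real.rpow_le_rpow (by positivity) hd2le (by linarith)
  have step2 : (I / ((p-1) * S)) ^ (p/2) = I ^ (p/2) / ((p-1)^(p/2) * S^(p/2)) := by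
    rw [Real.div_rpow hI0 hpS.le, Real.mul_rpow (by linarith) hSpos.le]
  have hc : (p-1) ≤ (p-1) ^ (p/2) :=
    calc (p-1) = (p-1) ^ (1:ℝ) := (Real.rpow_one _).symm
      _ ≤ (p-1) ^ (p/2) :=
        Real.rpow_le_rpow_of_exponent_ge (by linarith) (by linarith) (by linarith)
  have step3 : I ^ (p/2) / ((p-1)^(p/2) * S^(p/2)) ≤ I ^ (p/2) / ((p-1) * S^(p/2)) := by
    have hY : (0:ℝ) < S^(p/2) := Real.rpow_pos_of_pos hSpos _
    refine div_le_div_of_nonneg_left (Real.rpow_nonneg hI0 _)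
      (mul_pos (by linarith) hY) ?_
    exact mul_le_mul_of_nonneg_right hc hY.le
  -- relate S^(p/2) with (a^2+b^2)^(p/2)
  have hprod : S ^ (p/2) * ((a^2+b^2) ^ (p/2)) ^ ((2-p)/2) = 1 := by
    rw [hS_def, ← Real.rpow_mul hs2.le, ← Real.rpow_mul hs2.le, ← Real.rpow_add hs2,
      show (p-2)/2*(p/2) + p/2*((2-p)/2) = 0 by ring, Real.rpow_zero]
  have hsub : (a^2+b^2) ^ (p/2) ≤ a ^ p + b ^ p := by
    have h1 : (a^2:ℝ) ^ (p/2) = a ^ p := by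
      rcases ha.eq_or_lt with h | h
      · rw [← h]; norm_num
        rw [Real.zero_rpow (by linarith), Real.zero_rpow (by linarith)]
      · rw [← Real.rpow_two, ← Real.rpow_mul h.le, show (2:ℝ)*(p/2) = p by ring]
    have h2 : (b^2:ℝ) ^ (p/2) = b ^ p := by
      rcases hb.eq_or_lt with h | h
      · rw [← h]; norm_num
        rw [Real.zero_rpow (by linarith), Real.zero_rpow (by linarith)]
      · rw [← Real.rpow_two, ← Real.rpow_mul h.le, show (2:ℝ)*(p/2) = p by ring]
    calc (a^2+b^2) ^ (p/2) ≤ (a^2) ^ (p/2) + (b^2) ^ (p/2) :=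
          rpow_subadd (by positivity) (by positivity) (by linarith) (by linarith)
      _ = a ^ p + b ^ p := by rw [h1, h2]
  have step4 : I ^ (p/2) / ((p-1) * S^(p/2))
      = (1/(p-1)) * I ^ (p/2) * ((a^2+b^2) ^ (p/2)) ^ ((2-p)/2) := by
    have hY : (0:ℝ) < S ^ (p/2) := Real.rpow_pos_of_pos hSpos _
    have hZ : ((a^2+b^2) ^ (p/2)) ^ ((2-p)/2) = 1 / S ^ (p/2) := by
      field_simp
      linarith [hprod]
    rw [hZ]
    field_simp
  have step5 : (1/(p-1)) * I ^ (p/2) * ((a^2+b^2) ^ (p/2)) ^ ((2-p)/2)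
      ≤ (1/(p-1)) * I ^ (p/2) * (a ^ p + b ^ p) ^ ((2-p)/2) := by
    apply mul_le_mul_of_nonneg_left _
      (mul_nonneg (one_div_nonneg.mpr (by linarith)) (Real.rpow_nonneg hI0 _))
    exact Real.rpow_le_rpow (Real.rpow_nonneg hs2.le _) hsub (by linarith)
  calc ‖ζ - ξ‖ ^ p = (‖ζ - ξ‖ ^ 2 : ℝ) ^ (p/2) := hdp
    _ ≤ (I / ((p-1) * S)) ^ (p/2) := step1
    _ = I ^ (p/2) / ((p-1)^(p/2) * S^(p/2)) := step2
    _ ≤ I ^ (p/2) / ((p-1) * S^(p/2)) := step3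
    _ = (1/(p-1)) * I ^ (p/2) * ((a^2+b^2) ^ (p/2)) ^ ((2-p)/2) := step4
    _ ≤ (1/(p-1)) * I ^ (p/2) * (a ^ p + b ^ p) ^ ((2-p)/2) := step5
end

section
/- Let X be a normed space, Ω a measure space, and suppose ϑ₁ ∈ L^∞(Ω) with 1 ≤ ϑ₁⁻ ≤ ϑ₁(x) ≤ ϑ₁⁺ < ∞, and ϑ₂ : Ω → [1,∞) measurable with ϑ₁(x)ϑ₂(x) ≥ 1 a.e. Then for every u ∈ L^{ϑ₁(x)ϑ₂(x)}(Ω) (variable exponent Lebesgue space with Luxemburg norm), ‖ |u|^{ϑ₁(·)} ‖_{L^{ϑ₂(·)}(Ω)} ≤ ‖u‖_{L^{ϑ₁(·)ϑ₂(·)}(Ω)}^{ϑ₁⁻} + ‖u‖_{L^{ϑ₁(·)ϑ₂(·)}(Ω)}^{ϑ₁⁺}. -/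
/-!
If `η` is admissible for the Luxemburg norm of `u` in `L^{ϑ₁ϑ₂}`, then `η^c + η^C ≥ η^{ϑ₁(x)}`
for every `x`, and `(|u|^{ϑ₁} / η^{ϑ₁})^{ϑ₂} = (|u| / η)^{ϑ₁ϑ₂}`, so `η^c + η^C` is admissible
for `|u|^{ϑ₁}` in `L^{ϑ₂}`. Taking the infimum over `η` and using continuity of `η ↦ η^c + η^C`
gives the bound. Since `ϑ₂` is unbounded, `η < 1` may be admissible only because its integrand is
not integrable (Bochner integral `0`); then the integrand of `|u|^{ϑ₁}` at `η^C ≤ η^{ϑ₁}` is not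
integrable either, so `η^C` is admissible.
-/

open Real MeasureTheory

/-- The Luxemburg norm on the variable exponent Lebesgue space `L^{Θ(·)}(Ω)`. -/
noncomputable def luxNorm {Ω : Type*} [MeasurableSpace Ω] (μ : Measure Ω)
    (Θ : Ω → ℝ) (u : Ω → ℝ) : ℝ :=
  sInf {η : ℝ | 0 < η ∧ ∫ x, (|u x| / η) ^ (Θ x) ∂μ ≤ 1}

theorem le_apply_csInf_of_forall_le {α β : Type*} [ConditionallyCompleteLinearOrder α]
    [TopologicalSpace α] [OrderTopology α] [TopologicalSpace β] [LinearOrder β]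
    [OrderClosedTopology β] {s : Set α} {f : α → β} {b : β} (hf : Continuous f)
    (hs : s.Nonempty) (hbdd : BddBelow s) (h : ∀ x ∈ s, b ≤ f x) : b ≤ f (sInf s) :=
  closure_minimal h (isClosed_le continuous_const hf) (csInf_mem_closure hs hbdd)

namespace Real

theorem div_rpow_mul {a η : ℝ} (ha : 0 ≤ a) (hη : 0 ≤ η) (t s : ℝ) :
    (a / η) ^ (t * s) = (a ^ t / η ^ t) ^ s := by
  rw [rpow_mul (div_nonneg ha hη), div_rpow ha hη]

theorem div_rpow_le_rpow_div {a η t : ℝ} (ha : 0 ≤ a) (hη : 1 ≤ η) (ht : 1 ≤ t) :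
    (a / η) ^ t ≤ a ^ t / η := by
  rw [div_rpow ha (zero_le_one.trans hη)]
  exact div_le_div_of_nonneg_left (by positivity) (zero_lt_one.trans_le hη)
    (self_le_rpow_of_one_le hη ht)

theorem rpow_le_rpow_add_rpow {η c C t : ℝ} (hη : 0 < η) (hct : c ≤ t) (htC : t ≤ C) :
    η ^ t ≤ η ^ c + η ^ C := by
  rcases le_or_gt η 1 with h | h
  · exact (rpow_le_rpow_of_exponent_ge hη h hct).trans (le_add_of_nonneg_right (by positivity))
  · exact (rpow_le_rpow_of_exponent_le h.le htC).trans (le_add_of_nonneg_left (by positivity))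

end Real

section Luxemburg

variable {Ω : Type*} [MeasurableSpace Ω] {μ : Measure Ω} {Θ u : Ω → ℝ} {η : ℝ}

theorem luxNorm_le (hη : 0 < η) (h : ∫ x, (|u x| / η) ^ Θ x ∂μ ≤ 1) : luxNorm μ Θ u ≤ η :=
  csInf_le ⟨0, fun _ hx => hx.1.le⟩ ⟨hη, h⟩

theorem luxNorm_le_of_not_integrable (hη : 0 < η)
    (h : ¬Integrable (fun x => (|u x| / η) ^ Θ x) μ) : luxNorm μ Θ u ≤ η :=
  luxNorm_le hη (by rw [integral_undef h]; exact zero_le_one)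

theorem le_apply_luxNorm_of_forall_le {f : ℝ → ℝ} {b : ℝ} (hf : Continuous f)
    (hne : ∃ η, 0 < η ∧ ∫ x, (|u x| / η) ^ Θ x ∂μ ≤ 1)
    (h : ∀ η, 0 < η → ∫ x, (|u x| / η) ^ Θ x ∂μ ≤ 1 → b ≤ f η) : b ≤ f (luxNorm μ Θ u) :=
  le_apply_csInf_of_forall_le hf hne ⟨0, fun _ hx => hx.1.le⟩ fun η hη => h η hη.1 hη.2

variable (hu : Measurable u) (hΘ : Measurable Θ) (hΘ1 : ∀ᵐ x ∂μ, 1 ≤ Θ x)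
  (hint : Integrable (fun x => |u x| ^ Θ x) μ)
include hu hΘ hΘ1 hint

theorem integrable_div_rpow (hη : 1 ≤ η) : Integrable (fun x => (|u x| / η) ^ Θ x) μ := by
  refine (hint.div_const η).mono' ((hu.abs.div_const η).pow hΘ).aestronglyMeasurable ?_
  filter_upwards [hΘ1] with x hx
  rw [norm_of_nonneg (by positivity)]
  exact div_rpow_le_rpow_div (abs_nonneg _) hη hx

theorem exists_integral_div_rpow_le_one : ∃ η, 0 < η ∧ ∫ x, (|u x| / η) ^ Θ x ∂μ ≤ 1 := by
  set I := ∫ x, |u x| ^ Θ x ∂μ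
  have hη : 1 ≤ max 1 I := le_max_left _ _
  refine ⟨max 1 I, zero_lt_one.trans_le hη, ?_⟩
  calc ∫ x, (|u x| / max 1 I) ^ Θ x ∂μ ≤ ∫ x, |u x| ^ Θ x / max 1 I ∂μ := by
        refine integral_mono_ae (integrable_div_rpow hu hΘ hΘ1 hint hη) (hint.div_const _) ?_
        filter_upwards [hΘ1] with x hx
        exact div_rpow_le_rpow_div (abs_nonneg _) hη hx
    _ = I / max 1 I := integral_div _ _
    _ ≤ 1 := div_le_one_of_le₀ (le_max_right _ _) (by positivity)

end Luxemburg

section VariableExponentPower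

variable {Ω : Type*} [MeasurableSpace Ω] {μ : Measure Ω} {ϑ₁ ϑ₂ u : Ω → ℝ} {η b : ℝ}

theorem luxNorm_rpow_le_of_integrable (hη : 0 < η) (hb0 : 0 < b) (hb : ∀ x, η ^ ϑ₁ x ≤ b)
    (hϑ₂ : ∀ x, 0 ≤ ϑ₂ x) (hint : Integrable (fun x => (|u x| / η) ^ (ϑ₁ x * ϑ₂ x)) μ)
    (hle : ∫ x, (|u x| / η) ^ (ϑ₁ x * ϑ₂ x) ∂μ ≤ 1) :
    luxNorm μ ϑ₂ (fun x => |u x| ^ ϑ₁ x) ≤ b := by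
  refine luxNorm_le hb0 (le_trans (integral_mono_of_nonneg ?_ hint ?_) hle)
  · filter_upwards with x
    positivity
  · filter_upwards with x
    rw [abs_of_nonneg (by positivity), div_rpow_mul (abs_nonneg _) hη.le]
    exact rpow_le_rpow (by positivity)
      (div_le_div_of_nonneg_left (by positivity) (by positivity) (hb x)) (hϑ₂ x)

theorem luxNorm_rpow_le_of_not_integrable (hu : Measurable u) (hϑ₁ : Measurable ϑ₁)
    (hϑ₂ : Measurable ϑ₂) (hη : 0 < η) (hb0 : 0 < b) (hb : ∀ x, b ≤ η ^ ϑ₁ x)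
    (hϑ₂0 : ∀ x, 0 ≤ ϑ₂ x) (hint : ¬Integrable (fun x => (|u x| / η) ^ (ϑ₁ x * ϑ₂ x)) μ) :
    luxNorm μ ϑ₂ (fun x => |u x| ^ ϑ₁ x) ≤ b := by
  refine luxNorm_le_of_not_integrable hb0 fun h => hint (h.mono'
    ((hu.abs.div_const η).pow (hϑ₁.mul hϑ₂)).aestronglyMeasurable (ae_of_all _ fun x => ?_))
  rw [norm_of_nonneg (by positivity), div_rpow_mul (abs_nonneg _) hη.le,
    abs_of_nonneg (rpow_nonneg (abs_nonneg _) _)]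
  exact rpow_le_rpow (div_nonneg (by positivity) (rpow_pos_of_pos hη _).le)
    (div_le_div_of_nonneg_left (by positivity) hb0 (hb x)) (hϑ₂0 x)

end VariableExponentPower

theorem luxNorm_rpow_le {Ω : Type*} [MeasurableSpace Ω] (μ : Measure Ω)
    (ϑ₁ ϑ₂ : Ω → ℝ) (hϑ₁ : Measurable ϑ₁) (hϑ₂ : Measurable ϑ₂)
    (c C : ℝ) (hc : 1 ≤ c) (hcC : c ≤ C)
    (hϑ₁lb : ∀ x, c ≤ ϑ₁ x) (hϑ₁ub : ∀ x, ϑ₁ x ≤ C)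
    (hϑ₂lb : ∀ x, 1 ≤ ϑ₂ x)
    (hprod : ∀ᵐ x ∂μ, 1 ≤ ϑ₁ x * ϑ₂ x)
    (u : Ω → ℝ) (hu : Measurable u)
    (humem : Integrable (fun x => |u x| ^ (ϑ₁ x * ϑ₂ x)) μ) :
    luxNorm μ ϑ₂ (fun x => |u x| ^ (ϑ₁ x)) ≤
      luxNorm μ (fun x => ϑ₁ x * ϑ₂ x) u ^ c +
        luxNorm μ (fun x => ϑ₁ x * ϑ₂ x) u ^ C := by
  have hc0 : 0 ≤ c := zero_le_one.trans hc
  have hϑ₂0 : ∀ x, 0 ≤ ϑ₂ x := fun x => zero_le_one.trans (hϑ₂lb x)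
  have hϑ : Measurable fun x => ϑ₁ x * ϑ₂ x := hϑ₁.mul hϑ₂
  refine le_apply_luxNorm_of_forall_le
    ((continuous_rpow_const hc0).add (continuous_rpow_const (hc0.trans hcC)))
    (exists_integral_div_rpow_le_one hu hϑ hprod humem) fun η hη hle => ?_
  by_cases hint : Integrable (fun x => (|u x| / η) ^ (ϑ₁ x * ϑ₂ x)) μ
  · exact luxNorm_rpow_le_of_integrable hη (add_pos (rpow_pos_of_pos hη c) (rpow_pos_of_pos hη C))
      (fun x => rpow_le_rpow_add_rpow hη (hϑ₁lb x) (hϑ₁ub x)) hϑ₂0 hint hle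
  · have hη1 : η < 1 := not_le.1 fun h => hint (integrable_div_rpow hu hϑ hprod humem h)
    calc luxNorm μ ϑ₂ (fun x => |u x| ^ ϑ₁ x)
        ≤ η ^ C := luxNorm_rpow_le_of_not_integrable hu hϑ₁ hϑ₂ hη (by positivity)
          (fun x => rpow_le_rpow_of_exponent_ge hη hη1.le (hϑ₁ub x)) hϑ₂0 hint
      _ ≤ η ^ c + η ^ C := le_add_of_nonneg_left (by positivity)
end
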